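/- arXiv:1212.0705 — 3 statements merged into one kernel-verified Lean document; each statement's English description precedes it below -/
import Mathlib

section
/- Suppose (û, ŵ) ∈ 𝒲 satisfies E⁺(u, w) < ∞ and w + ψ ≥ 0 (i.e. ŵ ≥ 0). Then lim_{R→∞} w(R) = 0, i.e. ŵ(R) → 1 as R → ∞. -/
open MeasureTheory Set Filter
open scoped ENNReal

/-- The elastic energy density `ρ^el(r) = (ŵ² − 1 + û')² + (û/r)² + ŵ'² + ŵ²/r²`,
in terms of the hatted variables `uh = û`, `wh = ŵ` and their derivatives. -/
noncomputable def rhoEl (uh wh uh' wh' : ℝ → ℝ) (r : ℝ) : ℝ :=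
  (wh r ^ 2 - 1 + uh' r) ^ 2 + (uh r / r) ^ 2 + wh' r ^ 2 + wh r ^ 2 / r ^ 2

/-- `ψ` is a smooth cutoff function, `ψ = 0` near `0` and `ψ = 1` on `[1, ∞)`. -/
def IsCutoff (ψ : ℝ → ℝ) : Prop :=
  ContDiff ℝ (⊤ : ℕ∞) ψ ∧ (∃ ε > (0 : ℝ), ∀ r ≤ ε, ψ r = 0) ∧ (∀ r ≥ (1 : ℝ), ψ r = 1)

/-- Membership in `𝒲`: `(û, ŵ) ∈ W^{1,2}_loc((0,∞), ℝ²)` (continuous representatives with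
pointwise derivatives `uh', wh'`, locally square integrable) with `∫₀¹ r ρ^el(r) dr < ∞`. -/
def MemW (uh wh uh' wh' : ℝ → ℝ) : Prop :=
  (∀ r ∈ Ioi (0 : ℝ), HasDerivAt uh (uh' r) r) ∧
  (∀ r ∈ Ioi (0 : ℝ), HasDerivAt wh (wh' r) r) ∧
  (∀ a b : ℝ, 0 < a → IntegrableOn (fun r => uh' r ^ 2 + wh' r ^ 2) (Ioo a b)) ∧
  IntegrableOn (fun r => r * rhoEl uh wh uh' wh' r) (Ioo 0 1)

/-- The renormalized energy `E^R(u, w) = ∫₀^R r (ρ^el(r) − ψ(r)²/r²) dr`. -/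
noncomputable def ERen (ψ uh wh uh' wh' : ℝ → ℝ) (R : ℝ) : ℝ :=
  ∫ r in Ioo 0 R, r * (rhoEl uh wh uh' wh' r - ψ r ^ 2 / r ^ 2)

/-- The integrand of `E⁺(u, w; (1, R)) = ∫₁^R r [(2w + w² + u')² + u²/r² + w'²] dr`,
expressed in the hatted variables using that `ψ ≡ 1` on `[1, ∞)`, so that there
`w = ŵ − 1`, `u = û − 1/(2r)`, `u' = û' + 1/(2r²)`, `w' = ŵ'` and
`2w + w² = ŵ² − 1`. -/
noncomputable def outerDen (uh wh uh' wh' : ℝ → ℝ) (r : ℝ) : ℝ :=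
  r * ((wh r ^ 2 - 1 + uh' r + 1 / (2 * r ^ 2)) ^ 2 +
    ((uh r - 1 / (2 * r)) / r) ^ 2 + wh' r ^ 2)

/-- `E^{+,R}(u, w) = E⁺(u, w; (0,1)) + E⁺(u, w; (1,R))`. -/
noncomputable def EPlusR (uh wh uh' wh' : ℝ → ℝ) (R : ℝ) : ℝ :=
  (∫ r in Ioo 0 1, r * rhoEl uh wh uh' wh' r) + ∫ r in Ioo 1 R, outerDen uh wh uh' wh' r

/-- `E⁺(u, w) = E⁺(u, w; (0,1)) + E⁺(u, w; (1,∞)) ∈ [0, ∞]`. -/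
noncomputable def EPlusTop (uh wh uh' wh' : ℝ → ℝ) : ℝ≥0∞ :=
  ENNReal.ofReal (∫ r in Ioo 0 1, r * rhoEl uh wh uh' wh' r) +
    ∫⁻ r in Ioi 1, ENNReal.ofReal (outerDen uh wh uh' wh' r)

lemma aemeas_of_deriv (f : ℝ → ℝ) {f' : ℝ → ℝ}
    (hf : ∀ r ∈ Ioi (0:ℝ), HasDerivAt f (f' r) r)
    {s : Set ℝ} (hs : MeasurableSet s) (hsub : s ⊆ Ioi 0) :
    AEMeasurable f' (volume.restrict s) := by
  refine (measurable_deriv f).aemeasurable.congr ?_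
  filter_upwards [ae_restrict_mem hs] with r hr
  exact (hf r (hsub hr)).deriv

lemma amgm_abs (p x : ℝ) (hp : 0 < p) : |x| ≤ (p * x ^ 2 + 1 / p) / 2 := by
  have key : 2 * (p * |x|) ≤ p ^ 2 * x ^ 2 + 1 := by
    nlinarith [sq_nonneg (p * |x| - 1), sq_abs x]
  rw [le_div_iff₀ (by norm_num : (0:ℝ) < 2), ← sub_nonneg]
  have heq : p * x ^ 2 + 1 / p - |x| * 2 = (p ^ 2 * x ^ 2 + 1 - 2 * (p * |x|)) / p := by
    field_simp
  rw [heq]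
  exact div_nonneg (by linarith) hp.le

lemma small_pt (g : ℝ → ℝ) (c d η K : ℝ) (h1 : 1 ≤ c) (hcd : c < d)
    (hg : ContinuousOn g (Icc c d))
    (hint : ∫ s in Ioc c d, g s ^ 2 / s ≤ η) (hKη : η < K * Real.log (d / c)) :
    ∃ s ∈ Ioc c d, g s ^ 2 ≤ K := by
  by_contra hcon
  push_neg at hcon
  have hc0 : (0:ℝ) < c := lt_of_lt_of_le one_pos h1
  have hcont1 : ContinuousOn (fun s : ℝ => g s ^ 2 / s) (Icc c d) :=
    (hg.pow 2).div continuousOn_id (fun x hx => ne_of_gt (lt_of_lt_of_le hc0 hx.1))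
  have hcont2 : ContinuousOn (fun s : ℝ => K / s) (Icc c d) :=
    continuousOn_const.div continuousOn_id (fun x hx => ne_of_gt (lt_of_lt_of_le hc0 hx.1))
  have hint1 : IntegrableOn (fun s : ℝ => g s ^ 2 / s) (Ioc c d) :=
    (hcont1.integrableOn_Icc).mono_set Ioc_subset_Icc_self
  have hint2 : IntegrableOn (fun s : ℝ => K / s) (Ioc c d) :=
    (hcont2.integrableOn_Icc).mono_set Ioc_subset_Icc_self
  have hmono : ∫ s in Ioc c d, K / s ≤ ∫ s in Ioc c d, g s ^ 2 / s := by
    refine setIntegral_mono_on hint2 hint1 measurableSet_Ioc ?_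
    intro s hs
    have hs0 : (0:ℝ) < s := lt_of_lt_of_le hc0 hs.1.le
    exact (div_le_div_iff_of_pos_right hs0).mpr (hcon s hs).le
  have hKs : ∫ s in Ioc c d, K / s = K * Real.log (d / c) := by
    have heq : ∀ s ∈ Ioc c d, K / s = K * (1 / s) := by intro s _; ring
    rw [setIntegral_congr_fun measurableSet_Ioc heq, integral_const_mul,
      ← intervalIntegral.integral_of_le hcd.le, integral_one_div]
    intro h0
    rcases Set.mem_uIcc.mp h0 with ⟨ha, _⟩ | ⟨_, hb⟩ <;> linarith
  linarith [hKs ▸ hmono, hint]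

lemma l1_bound (f : ℝ → ℝ) (a b t η : ℝ) (h1 : 1 ≤ a) (hab : a ≤ b) (ht : 0 < t)
    (hf : IntegrableOn f (Ioc a b))
    (hsq : IntegrableOn (fun s => s * f s ^ 2) (Ioc a b))
    (hη : ∫ s in Ioc a b, s * f s ^ 2 ≤ η) :
    ∫ s in Ioc a b, |f s| ≤ (t * η + (1 / t) * Real.log (b / a)) / 2 := by
  have ha0 : (0:ℝ) < a := lt_of_lt_of_le one_pos h1
  have hinv : IntegrableOn (fun s : ℝ => 1 / s) (Ioc a b) :=
    ((continuousOn_const.div continuousOn_id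
      (fun x hx => ne_of_gt (lt_of_lt_of_le ha0 hx.1))).integrableOn_Icc).mono_set
      Ioc_subset_Icc_self
  have hG : IntegrableOn (fun s : ℝ => (t * (s * f s ^ 2) + (1 / t) * (1 / s)) / 2)
      (Ioc a b) := (((hsq.const_mul t).add (hinv.const_mul (1 / t))).div_const 2)
  have hmono : ∫ s in Ioc a b, |f s| ≤
      ∫ s in Ioc a b, (t * (s * f s ^ 2) + (1 / t) * (1 / s)) / 2 := by
    refine setIntegral_mono_on hf.abs hG measurableSet_Ioc ?_
    intro s hs
    have hs0 : (0:ℝ) < s := lt_of_lt_of_le ha0 hs.1.le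
    calc |f s| ≤ (t * s * f s ^ 2 + 1 / (t * s)) / 2 := amgm_abs (t * s) (f s) (mul_pos ht hs0)
      _ = (t * (s * f s ^ 2) + (1 / t) * (1 / s)) / 2 := by
          rw [one_div (t * s), mul_inv, mul_assoc]; rw [one_div, one_div]
  have hlog : ∫ s in Ioc a b, (1:ℝ) / s = Real.log (b / a) := by
    rw [← intervalIntegral.integral_of_le hab, integral_one_div]
    intro h0
    rcases Set.mem_uIcc.mp h0 with ⟨h0a, _⟩ | ⟨_, h0b⟩ <;> linarith
  have hsplit : ∫ s in Ioc a b, (t * (s * f s ^ 2) + (1 / t) * (1 / s)) / 2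
      = (t * (∫ s in Ioc a b, s * f s ^ 2) + (1 / t) * Real.log (b / a)) / 2 := by
    rw [integral_div, integral_add (hsq.const_mul t) (hinv.const_mul (1 / t)),
      integral_const_mul, integral_const_mul, hlog]
  rw [hsplit] at hmono
  have : t * (∫ s in Ioc a b, s * f s ^ 2) ≤ t * η := mul_le_mul_of_nonneg_left hη ht.le
  calc ∫ s in Ioc a b, |f s| ≤ _ := hmono
    _ ≤ (t * η + (1 / t) * Real.log (b / a)) / 2 := by linarith

lemma tail_small (F : ℝ → ℝ) (hFint : IntegrableOn F (Ioi 1))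
    (ε' : ℝ) (hε' : 0 < ε') :
    ∃ R₀ : ℝ, 1 ≤ R₀ ∧ ∫ s in Ioi R₀, F s ≤ ε' := by
  have hU : (⋃ n : ℕ, Ioc (1:ℝ) (n:ℝ)) = Ioi 1 := by
    ext x
    simp only [mem_iUnion, mem_Ioc, mem_Ioi]
    constructor
    · rintro ⟨n, h1, _⟩; exact h1
    · intro hx; obtain ⟨n, hn⟩ := exists_nat_ge x; exact ⟨n, hx, hn⟩
  have hmonoS : Monotone fun n : ℕ => Ioc (1:ℝ) (n:ℝ) := fun m n hmn =>
    Ioc_subset_Ioc_right (Nat.cast_le.mpr hmn)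
  have htend := tendsto_setIntegral_of_monotone (fun n : ℕ => measurableSet_Ioc) hmonoS
    (hU ▸ hFint)
  rw [hU] at htend
  rw [Metric.tendsto_atTop] at htend
  obtain ⟨N, hN⟩ := htend ε' hε'
  set n : ℕ := max N 1 with hn
  have hn1 : (1:ℝ) ≤ (n:ℝ) := by exact_mod_cast Nat.one_le_iff_ne_zero.mpr (by positivity)
  refine ⟨(n:ℝ), hn1, ?_⟩
  have hdist := hN n (le_max_left _ _)
  rw [Real.dist_eq, abs_lt] at hdist
  have hsplit : ∫ s in Ioi (1:ℝ), F s
      = (∫ s in Ioc (1:ℝ) (n:ℝ), F s) + ∫ s in Ioi (n:ℝ), F s := by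
    rw [← setIntegral_union (Ioc_disjoint_Ioi le_rfl) measurableSet_Ioi
      (hFint.mono_set (Ioc_subset_Ioi_self.trans (Ioi_subset_Ioi le_rfl)))
      (hFint.mono_set (Ioi_subset_Ioi hn1)), Ioc_union_Ioi_eq_Ioi hn1]
  linarith [hdist.1, hdist.2, hsplit]

lemma outerDen_decomp (uh wh uh' wh' : ℝ → ℝ) {s : ℝ} (hs : s ≠ 0) :
    outerDen uh wh uh' wh' s = s * (wh s ^ 2 - 1 + uh' s + 1 / (2 * s ^ 2)) ^ 2 +
      (uh s - 1 / (2 * s)) ^ 2 / s + s * wh' s ^ 2 := by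
  unfold outerDen
  field_simp

lemma outerDen_int (uh wh uh' wh' : ℝ → ℝ)
    (hu : ∀ r ∈ Ioi (0:ℝ), HasDerivAt uh (uh' r) r)
    (hw : ∀ r ∈ Ioi (0:ℝ), HasDerivAt wh (wh' r) r)
    (hfin : ∫⁻ r in Ioi 1, ENNReal.ofReal (outerDen uh wh uh' wh' r) < ⊤) :
    IntegrableOn (outerDen uh wh uh' wh') (Ioi 1) := by
  have hsub : Ioi (1:ℝ) ⊆ Ioi 0 := Ioi_subset_Ioi zero_le_one
  have huC : ContinuousOn uh (Ioi 0) := fun x hx =>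
    (hu x hx).continuousAt.continuousWithinAt
  have hwC : ContinuousOn wh (Ioi 0) := fun x hx =>
    (hw x hx).continuousAt.continuousWithinAt
  have m1 : AEMeasurable uh (volume.restrict (Ioi 1)) :=
    (huC.mono hsub).aemeasurable measurableSet_Ioi
  have m2 : AEMeasurable wh (volume.restrict (Ioi 1)) :=
    (hwC.mono hsub).aemeasurable measurableSet_Ioi
  have m3 : AEMeasurable uh' (volume.restrict (Ioi 1)) :=
    aemeas_of_deriv uh hu measurableSet_Ioi hsub
  have m4 : AEMeasurable wh' (volume.restrict (Ioi 1)) :=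
    aemeas_of_deriv wh hw measurableSet_Ioi hsub
  have hFmeas : AEMeasurable (outerDen uh wh uh' wh') (volume.restrict (Ioi 1)) := by
    unfold outerDen
    have c1 : Measurable fun r : ℝ => 1 / (2 * r ^ 2) :=
      measurable_const.div ((measurable_id.pow_const 2).const_mul 2)
    have c2 : Measurable fun r : ℝ => 1 / (2 * r) :=
      measurable_const.div (measurable_id.const_mul 2)
    have A1 : AEMeasurable (fun r : ℝ => wh r ^ 2 - 1 + uh' r + 1 / (2 * r ^ 2))
        (volume.restrict (Ioi 1)) :=
      (((m2.pow_const 2).sub aemeasurable_const).add m3).add c1.aemeasurable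
    have A2 : AEMeasurable (fun r : ℝ => (uh r - 1 / (2 * r)) / r)
        (volume.restrict (Ioi 1)) := (m1.sub c2.aemeasurable).div aemeasurable_id
    exact aemeasurable_id.mul
      (((A1.pow_const 2).add (A2.pow_const 2)).add (m4.pow_const 2))
  have hFnn : ∀ᵐ s ∂(volume.restrict (Ioi (1:ℝ))), 0 ≤ outerDen uh wh uh' wh' s := by
    filter_upwards [ae_restrict_mem measurableSet_Ioi] with s hs
    have hs0 : (0:ℝ) < s := lt_trans one_pos hs
    unfold outerDen
    positivity
  exact ⟨hFmeas.aestronglyMeasurable, (hasFiniteIntegral_iff_ofReal hFnn).mpr hfin⟩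

set_option maxHeartbeats 2000000 in
/-- if `(û, ŵ) ∈ 𝒲` with `E⁺(u, w) < ∞` and `w + ψ ≥ 0` (i.e. `ŵ ≥ 0`),
then `w(R) → 0`, i.e. `ŵ(R) → 1`, as `R → ∞`. -/
theorem stmt13 (ψ : ℝ → ℝ) (hψ : IsCutoff ψ)
    (uh wh uh' wh' : ℝ → ℝ) (hW : MemW uh wh uh' wh')
    (hfin : EPlusTop uh wh uh' wh' < ⊤)
    (hpos : ∀ r ∈ Ioi (0 : ℝ), 0 ≤ wh r) :
    Tendsto wh atTop (nhds 1) := by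
  obtain ⟨hu, hw, hloc, -⟩ := hW
  have huC : ContinuousOn uh (Ioi 0) := fun x hx =>
    (hu x hx).continuousAt.continuousWithinAt
  have hwC : ContinuousOn wh (Ioi 0) := fun x hx =>
    (hw x hx).continuousAt.continuousWithinAt
  have hfin2 : ∫⁻ r in Ioi 1, ENNReal.ofReal (outerDen uh wh uh' wh' r) < ⊤ := by
    unfold EPlusTop at hfin
    exact (ENNReal.add_lt_top.mp hfin).2
  have hFint : IntegrableOn (outerDen uh wh uh' wh') (Ioi 1) :=
    outerDen_int uh wh uh' wh' hu hw hfin2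
  have hFnn : ∀ s : ℝ, 0 < s → 0 ≤ outerDen uh wh uh' wh' s := by
    intro s hs; unfold outerDen; positivity
  rw [Metric.tendsto_atTop]
  intro ε₀ hε₀
  set ε := min ε₀ 1 with hεdef
  have hε0 : 0 < ε := lt_min hε₀ one_pos
  have hε1 : ε ≤ 1 := min_le_right _ _
  obtain ⟨R₀, hR₀1, hR₀⟩ := tail_small _ hFint (ε ^ 2 / 256) (by positivity)
  refine ⟨max R₀ 3, fun r hr => ?_⟩
  have hr3 : (3:ℝ) ≤ r := le_trans (le_max_right _ _) hr
  have hrR : R₀ ≤ r := le_trans (le_max_left _ _) hr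
  have hr1 : (1:ℝ) ≤ r := by linarith
  have hr0 : (0:ℝ) < r := by linarith
  rw [Real.dist_eq]
  refine lt_of_lt_of_le ?_ (min_le_left ε₀ 1)
  by_contra hcon
  push_neg at hcon
  -- now `hcon : min ε₀ 1 ≤ |wh r - 1|`, i.e. `ε ≤ |wh r - 1|`
  rw [← hεdef] at hcon
  -- basic set inclusions
  have hIoi0 : Ioc r (2 * r) ⊆ Ioi (0:ℝ) := fun s hs => lt_trans hr0 hs.1
  have hIcc0 : Icc r (2 * r) ⊆ Ioi (0:ℝ) := fun s hs => lt_of_lt_of_le hr0 hs.1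
  have hsubR : Ioc r (2 * r) ⊆ Ioi R₀ := fun s hs => lt_of_le_of_lt hrR hs.1
  set η := ∫ s in Ioi R₀, outerDen uh wh uh' wh' s with hηdef
  have hη0 : 0 ≤ η := setIntegral_nonneg measurableSet_Ioi
    (fun s hs => hFnn s (lt_of_lt_of_le (lt_of_lt_of_le one_pos hR₀1) (le_of_lt hs)))
  have hηε : η ≤ ε ^ 2 / 256 := hR₀
  have hFintR : IntegrableOn (outerDen uh wh uh' wh') (Ioi R₀) :=
    hFint.mono_set (Ioi_subset_Ioi hR₀1)
  -- key comparison
  have key : ∀ (h : ℝ → ℝ) (c d : ℝ), Ioc c d ⊆ Ioi R₀ →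
      IntegrableOn h (Ioc c d) → (∀ s ∈ Ioc c d, h s ≤ outerDen uh wh uh' wh' s) →
      ∫ s in Ioc c d, h s ≤ η := by
    intro h c d hsub hint hbd
    have h1 : ∫ s in Ioc c d, h s ≤ ∫ s in Ioc c d, outerDen uh wh uh' wh' s :=
      setIntegral_mono_on hint (hFintR.mono_set hsub) measurableSet_Ioc hbd
    have h2 : ∫ s in Ioc c d, outerDen uh wh uh' wh' s ≤ η := by
      refine setIntegral_mono_set hFintR ?_ (HasSubset.Subset.eventuallyLE hsub)
      filter_upwards [ae_restrict_mem measurableSet_Ioi] with s hs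
      exact hFnn s (lt_of_lt_of_le (lt_of_lt_of_le one_pos hR₀1) hs.le)
    linarith
  -- integrability on Ioc r (2r)
  have hIsub : Ioc r (2 * r) ⊆ Ioo (1/2) (2 * r + 1) := fun s hs =>
    ⟨by linarith [hs.1], by linarith [hs.2]⟩
  have hsum : IntegrableOn (fun s => uh' s ^ 2 + wh' s ^ 2) (Ioc r (2 * r)) :=
    (hloc (1/2) (2 * r + 1) (by norm_num)).mono_set hIsub
  have mu' : AEMeasurable uh' (volume.restrict (Ioc r (2 * r))) :=
    aemeas_of_deriv uh hu measurableSet_Ioc hIoi0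
  have mw' : AEMeasurable wh' (volume.restrict (Ioc r (2 * r))) :=
    aemeas_of_deriv wh hw measurableSet_Ioc hIoi0
  have husq : IntegrableOn (fun s => uh' s ^ 2) (Ioc r (2 * r)) := by
    refine hsum.mono' (mu'.pow_const 2).aestronglyMeasurable ?_
    filter_upwards with s
    rw [Real.norm_eq_abs, abs_of_nonneg (sq_nonneg _)]
    nlinarith [sq_nonneg (wh' s)]
  have hwsq : IntegrableOn (fun s => wh' s ^ 2) (Ioc r (2 * r)) := by
    refine hsum.mono' (mw'.pow_const 2).aestronglyMeasurable ?_
    filter_upwards with s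
    rw [Real.norm_eq_abs, abs_of_nonneg (sq_nonneg _)]
    nlinarith [sq_nonneg (uh' s)]
  have hu'int : IntegrableOn uh' (Ioc r (2 * r)) := by
    have hone : IntegrableOn (fun _ : ℝ => (1:ℝ)) (Ioc r (2 * r)) :=
      integrableOn_const measure_Ioc_lt_top.ne
    refine Integrable.mono' (hone.add husq) mu'.aestronglyMeasurable ?_
    filter_upwards with s
    simp only [Pi.add_apply, Real.norm_eq_abs]
    nlinarith [sq_nonneg (|uh' s| - 1), sq_abs (uh' s), abs_nonneg (uh' s)]
  have hw'int : IntegrableOn wh' (Ioc r (2 * r)) := by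
    have hone : IntegrableOn (fun _ : ℝ => (1:ℝ)) (Ioc r (2 * r)) :=
      integrableOn_const measure_Ioc_lt_top.ne
    refine Integrable.mono' (hone.add hwsq) mw'.aestronglyMeasurable ?_
    filter_upwards with s
    simp only [Pi.add_apply, Real.norm_eq_abs]
    nlinarith [sq_nonneg (|wh' s| - 1), sq_abs (wh' s), abs_nonneg (wh' s)]
  -- log bounds
  have hlog2 : Real.log ((2 * r) / r) ≤ 1 := by
    rw [mul_div_assoc, div_self (ne_of_gt hr0), mul_one]
    linarith [Real.log_le_sub_one_of_pos (by norm_num : (0:ℝ) < 2)]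
  have hεt : (1:ℝ) / (4 / ε) = ε / 4 := one_div_div 4 ε
  -- bound for wh'
  have hswsq_int : IntegrableOn (fun s => s * wh' s ^ 2) (Ioc r (2 * r)) := by
    refine Integrable.mono' (hwsq.const_mul (2 * r + 1))
      (aemeasurable_id.mul (mw'.pow_const 2)).aestronglyMeasurable ?_
    filter_upwards [ae_restrict_mem measurableSet_Ioc] with s hs
    rw [Real.norm_eq_abs, abs_of_nonneg (mul_nonneg (hIoi0 hs).le (sq_nonneg _))]
    nlinarith [sq_nonneg (wh' s), hs.2, hs.1, hr0]
  have hswsq_le : ∫ s in Ioc r (2 * r), s * wh' s ^ 2 ≤ η := by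
    refine key _ _ _ hsubR hswsq_int ?_
    intro s hs
    have hs0 : (0:ℝ) < s := hIoi0 hs
    rw [outerDen_decomp uh wh uh' wh' hs0.ne']
    have t1 : 0 ≤ s * (wh s ^ 2 - 1 + uh' s + 1 / (2 * s ^ 2)) ^ 2 := by positivity
    have t2 : 0 ≤ (uh s - 1 / (2 * s)) ^ 2 / s := by positivity
    linarith
  have hw'l1 : ∫ s in Ioc r (2 * r), |wh' s| ≤ ε / 4 := by
    have hb := l1_bound wh' r (2 * r) (4 / ε) η hr1 (by linarith) (by positivity)
      hw'int hswsq_int hswsq_le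
    rw [hεt] at hb
    have h1 : (4 / ε) * η ≤ ε / 64 := by
      have : (4 / ε) * η ≤ (4 / ε) * (ε ^ 2 / 256) :=
        mul_le_mul_of_nonneg_left hηε (by positivity)
      calc (4 / ε) * η ≤ (4 / ε) * (ε ^ 2 / 256) := this
        _ = ε / 64 := by field_simp; ring
    have h2 : (ε / 4) * Real.log ((2 * r) / r) ≤ ε / 4 * 1 := by
      refine mul_le_mul_of_nonneg_left hlog2 (by positivity)
    calc ∫ s in Ioc r (2 * r), |wh' s| ≤ _ := hb
      _ ≤ ε / 4 := by linarith
  -- the function A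
  set A := fun s : ℝ => wh s ^ 2 - 1 + uh' s + 1 / (2 * s ^ 2) with hAdef
  have hXcont : ContinuousOn (fun s : ℝ => wh s ^ 2 - 1 + 1 / (2 * s ^ 2)) (Icc r (2 * r)) := by
    refine (((hwC.mono hIcc0).pow 2).sub continuousOn_const).add
      (continuousOn_const.div (by fun_prop) ?_)
    intro x hx
    have : (0:ℝ) < x := hIcc0 hx
    positivity
  have hc12cont : ContinuousOn (fun s : ℝ => 1 / (2 * s ^ 2)) (Icc r (2 * r)) := by
    refine continuousOn_const.div (by fun_prop) ?_
    intro x hx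
    have : (0:ℝ) < x := hIcc0 hx
    positivity
  have hwsqcont : ContinuousOn (fun s : ℝ => wh s ^ 2 - 1) (Icc r (2 * r)) :=
    ((hwC.mono hIcc0).pow 2).sub continuousOn_const
  have hAint : IntegrableOn A (Ioc r (2 * r)) := by
    have i1 : IntegrableOn (fun s : ℝ => wh s ^ 2 - 1) (Ioc r (2 * r)) :=
      hwsqcont.integrableOn_Icc.mono_set Ioc_subset_Icc_self
    have i2 : IntegrableOn (fun s : ℝ => 1 / (2 * s ^ 2)) (Ioc r (2 * r)) :=
      hc12cont.integrableOn_Icc.mono_set Ioc_subset_Icc_self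
    exact (i1.add hu'int).add i2
  have hAmeas : AEMeasurable A (volume.restrict (Ioc r (2 * r))) := hAint.aemeasurable
  have hsAsq_int : IntegrableOn (fun s => s * A s ^ 2) (Ioc r (2 * r)) := by
    have iX : IntegrableOn (fun s : ℝ => (wh s ^ 2 - 1 + 1 / (2 * s ^ 2)) ^ 2)
        (Ioc r (2 * r)) :=
      (hXcont.pow 2).integrableOn_Icc.mono_set Ioc_subset_Icc_self
    have hgint : IntegrableOn
        (fun s : ℝ => (2 * r + 1) * (2 * (wh s ^ 2 - 1 + 1 / (2 * s ^ 2)) ^ 2 + 2 * uh' s ^ 2))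
        (Ioc r (2 * r)) := ((iX.const_mul 2).add (husq.const_mul 2)).const_mul (2 * r + 1)
    refine Integrable.mono' hgint
      (aemeasurable_id.mul (hAmeas.pow_const 2)).aestronglyMeasurable ?_
    filter_upwards [ae_restrict_mem measurableSet_Ioc] with s hs
    have hs0 : (0:ℝ) < s := hIoi0 hs
    rw [Real.norm_eq_abs, abs_of_nonneg (mul_nonneg hs0.le (sq_nonneg _))]
    have hA2 : A s ^ 2 ≤ 2 * (wh s ^ 2 - 1 + 1 / (2 * s ^ 2)) ^ 2 + 2 * uh' s ^ 2 := by
      rw [hAdef]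
      nlinarith [sq_nonneg (wh s ^ 2 - 1 + 1 / (2 * s ^ 2) - uh' s)]
    nlinarith [hs.2, sq_nonneg (A s), hs0]
  have hsAsq_le : ∫ s in Ioc r (2 * r), s * A s ^ 2 ≤ η := by
    refine key _ _ _ hsubR hsAsq_int ?_
    intro s hs
    have hs0 : (0:ℝ) < s := hIoi0 hs
    rw [outerDen_decomp uh wh uh' wh' hs0.ne']
    have t2 : 0 ≤ (uh s - 1 / (2 * s)) ^ 2 / s := by positivity
    have t3 : 0 ≤ s * wh' s ^ 2 := by positivity
    rw [hAdef]
    linarith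
  have hAl1 : ∫ s in Ioc r (2 * r), |A s| ≤ ε / 4 := by
    have hb := l1_bound A r (2 * r) (4 / ε) η hr1 (by linarith) (by positivity)
      hAint hsAsq_int hsAsq_le
    rw [hεt] at hb
    have h1 : (4 / ε) * η ≤ ε / 64 := by
      calc (4 / ε) * η ≤ (4 / ε) * (ε ^ 2 / 256) :=
            mul_le_mul_of_nonneg_left hηε (by positivity)
        _ = ε / 64 := by field_simp; ring
    have h2 : (ε / 4) * Real.log ((2 * r) / r) ≤ ε / 4 * 1 :=
      mul_le_mul_of_nonneg_left hlog2 (by positivity)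
    calc ∫ s in Ioc r (2 * r), |A s| ≤ _ := hb
      _ ≤ ε / 4 := by linarith
  -- the function u
  set u := fun s : ℝ => uh s - 1 / (2 * s) with hudef
  have hucont : ContinuousOn u (Icc r (2 * r)) := by
    refine (huC.mono hIcc0).sub (continuousOn_const.div (by fun_prop) ?_)
    intro x hx
    have : (0:ℝ) < x := hIcc0 hx
    positivity
  -- small-u points
  have husmall : ∀ c d : ℝ, r ≤ c → c < d → d ≤ 2 * r → 1/8 ≤ Real.log (d / c) →
      ∃ s ∈ Ioc c d, u s ^ 2 ≤ ε ^ 2 / 16 := by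
    intro c d hrc hcd hd2r hlog
    have hc1 : (1:ℝ) ≤ c := le_trans hr1 hrc
    have hintu : ∫ s in Ioc c d, u s ^ 2 / s ≤ η := by
      refine key _ _ _ (fun s hs => lt_of_le_of_lt (le_trans hrR hrc) hs.1) ?_ ?_
      · refine IntegrableOn.mono_set ?_ Ioc_subset_Icc_self
        refine ContinuousOn.integrableOn_Icc ?_
        refine ((hucont.mono ?_).pow 2).div continuousOn_id ?_
        · exact fun x hx => ⟨le_trans hrc hx.1, le_trans hx.2 hd2r⟩
        · intro x hx
          exact ne_of_gt (lt_of_lt_of_le (lt_of_lt_of_le one_pos hc1) hx.1)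
      · intro s hs
        have hs0 : (0:ℝ) < s := lt_of_lt_of_le (lt_of_lt_of_le one_pos hc1) hs.1.le
        rw [outerDen_decomp uh wh uh' wh' hs0.ne']
        have t1 : 0 ≤ s * (wh s ^ 2 - 1 + uh' s + 1 / (2 * s ^ 2)) ^ 2 := by positivity
        have t3 : 0 ≤ s * wh' s ^ 2 := by positivity
        rw [hudef]
        linarith
    refine small_pt u c d η (ε ^ 2 / 16) hc1 hcd
      (hucont.mono (fun x hx => ⟨le_trans hrc hx.1, le_trans hx.2 hd2r⟩)) hintu ?_
    calc η ≤ ε ^ 2 / 256 := hηε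
      _ < (ε ^ 2 / 16) * (1/8) := by nlinarith [pow_pos hε0 2]
      _ ≤ (ε ^ 2 / 16) * Real.log (d / c) :=
          mul_le_mul_of_nonneg_left hlog (by positivity)
  have hlog54 : (1:ℝ)/8 ≤ Real.log ((5/4 * r) / r) := by
    have : (5/4 * r) / r = 5/4 := by field_simp
    rw [this]
    have h45 := Real.log_le_sub_one_of_pos (by norm_num : (0:ℝ) < 4/5)
    have : Real.log (5/4 : ℝ) = - Real.log (4/5 : ℝ) := by
      rw [← Real.log_inv]; norm_num
    linarith
  have hlog87 : (1:ℝ)/8 ≤ Real.log ((2 * r) / (7/4 * r)) := by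
    have : (2 * r) / (7/4 * r) = 8/7 := by field_simp; ring
    rw [this]
    have h78 := Real.log_le_sub_one_of_pos (by norm_num : (0:ℝ) < 7/8)
    have : Real.log (8/7 : ℝ) = - Real.log (7/8 : ℝ) := by
      rw [← Real.log_inv]; norm_num
    linarith
  obtain ⟨a, ha_mem, ha_sq⟩ := husmall r (5/4 * r) le_rfl (by linarith) (by linarith) hlog54
  obtain ⟨b, hb_mem, hb_sq⟩ := husmall (7/4 * r) (2 * r) (by linarith) (by linarith) le_rfl hlog87
  have hua : |u a| ≤ ε / 4 := by
    rw [abs_le]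
    constructor <;> nlinarith [ha_sq, sq_nonneg (u a - ε/4), sq_nonneg (u a + ε/4)]
  have hub : |u b| ≤ ε / 4 := by
    rw [abs_le]
    constructor <;> nlinarith [hb_sq, sq_nonneg (u b - ε/4), sq_nonneg (u b + ε/4)]
  have hra : r < a := ha_mem.1
  have ha54 : a ≤ 5/4 * r := ha_mem.2
  have hb74 : 7/4 * r < b := hb_mem.1
  have hb2r : b ≤ 2 * r := hb_mem.2
  have hab : a ≤ b := by linarith
  have hba : (3:ℝ)/2 ≤ b - a := by linarith
  have hIccab : Icc a b ⊆ Ioc r (2 * r) := fun s hs =>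
    ⟨lt_of_lt_of_le hra hs.1, le_trans hs.2 hb2r⟩
  have hIocab : Ioc a b ⊆ Ioc r (2 * r) := fun s hs =>
    ⟨lt_trans hra hs.1, le_trans hs.2 hb2r⟩
  -- FTC for u
  have hderivu : ∀ s ∈ uIcc a b, HasDerivAt u (uh' s + 1 / (2 * s ^ 2)) s := by
    intro s hs
    rw [uIcc_of_le hab] at hs
    have hs0 : (0:ℝ) < s := lt_of_lt_of_le hr0 (le_of_lt (lt_of_lt_of_le hra hs.1))
    have h2s : (2:ℝ) * s ≠ 0 := by positivity
    have hinv : HasDerivAt (fun y : ℝ => 1 / (2 * y)) (-(1 / (2 * s ^ 2))) s := by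
      have h := ((hasDerivAt_id s).const_mul (2:ℝ)).inv h2s
      have heq2 : (-(1 / (2 * s ^ 2))) = -(2 * 1) / (2 * s) ^ 2 := by
        field_simp
      rw [heq2]
      exact h.congr_of_eventuallyEq (Filter.Eventually.of_forall fun y => by simp [one_div])
    have := (hu s hs0).sub hinv
    rw [hudef]
    rw [← sub_neg_eq_add]
    exact this
  have hiint : IntervalIntegrable (fun s : ℝ => uh' s + 1 / (2 * s ^ 2)) volume a b := by
    rw [intervalIntegrable_iff_integrableOn_Ioc_of_le hab]
    exact (hu'int.mono_set (fun s hs => hIocab hs)).add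
      ((hc12cont.integrableOn_Icc.mono_set Ioc_subset_Icc_self).mono_set
        (fun s hs => hIocab hs))
  have hftc : ∫ s in a..b, (uh' s + 1 / (2 * s ^ 2)) = u b - u a :=
    intervalIntegral.integral_eq_sub_of_hasDerivAt hderivu hiint
  -- integral identity
  have hwsqcont_ab : ContinuousOn (fun s : ℝ => wh s ^ 2 - 1) (Icc a b) :=
    hwsqcont.mono (fun s hs => ⟨hra.le.trans hs.1, hs.2.trans hb2r⟩)
  have hiint2 : IntervalIntegrable (fun s : ℝ => wh s ^ 2 - 1) volume a b := by
    rw [intervalIntegrable_iff_integrableOn_Ioc_of_le hab]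
    exact hwsqcont_ab.integrableOn_Icc.mono_set Ioc_subset_Icc_self
  have hiintA : IntervalIntegrable A volume a b := by
    rw [intervalIntegrable_iff_integrableOn_Ioc_of_le hab]
    exact hAint.mono_set (fun s hs => hIocab hs)
  have hsplitA : ∫ s in a..b, (wh s ^ 2 - 1) = (∫ s in a..b, A s) - (u b - u a) := by
    rw [← hftc, ← intervalIntegral.integral_sub hiintA hiint]
    refine intervalIntegral.integral_congr ?_
    intro s _
    rw [hAdef]
    ring
  -- bound on |∫ A|
  have hAab : |∫ s in a..b, A s| ≤ ε / 4 := by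
    calc |∫ s in a..b, A s| ≤ ∫ s in a..b, |A s| :=
          intervalIntegral.abs_integral_le_integral_abs hab
      _ = ∫ s in Ioc a b, |A s| := intervalIntegral.integral_of_le hab
      _ ≤ ∫ s in Ioc r (2 * r), |A s| := by
          refine setIntegral_mono_set hAint.abs ?_
            (HasSubset.Subset.eventuallyLE hIocab)
          filter_upwards with s using abs_nonneg _
      _ ≤ ε / 4 := hAl1
  have hmain : |∫ s in a..b, (wh s ^ 2 - 1)| ≤ 3/4 * ε := by
    rw [hsplitA]
    calc |(∫ s in a..b, A s) - (u b - u a)| ≤ |∫ s in a..b, A s| + |u b - u a| :=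
          abs_sub _ _
      _ ≤ ε / 4 + (|u b| + |u a|) := by
          gcongr
          exact abs_sub _ _
      _ ≤ 3/4 * ε := by linarith
  -- oscillation bound
  have hosc : ∀ s ∈ Icc a b, |wh s - wh r| ≤ ε / 4 := by
    intro s hs
    have hrs : r ≤ s := (hra.trans_le hs.1).le
    have hs2r : s ≤ 2 * r := hs.2.trans hb2r
    have hftcw : ∫ x in r..s, wh' x = wh s - wh r := by
      refine intervalIntegral.integral_eq_sub_of_hasDerivAt ?_ ?_
      · intro x hx
        rw [uIcc_of_le hrs] at hx
        exact hw x (lt_of_lt_of_le hr0 hx.1)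
      · rw [intervalIntegrable_iff_integrableOn_Ioc_of_le hrs]
        exact hw'int.mono_set (Ioc_subset_Ioc_right hs2r)
    calc |wh s - wh r| = |∫ x in r..s, wh' x| := by rw [hftcw]
      _ ≤ ∫ x in r..s, |wh' x| := intervalIntegral.abs_integral_le_integral_abs hrs
      _ = ∫ x in Ioc r s, |wh' x| := intervalIntegral.integral_of_le hrs
      _ ≤ ∫ x in Ioc r (2 * r), |wh' x| := by
          refine setIntegral_mono_set hw'int.abs ?_
            (HasSubset.Subset.eventuallyLE (Ioc_subset_Ioc_right hs2r))
          filter_upwards with x using abs_nonneg _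
      _ ≤ ε / 4 := hw'l1
  -- integral of wh^2-1 over Ioc a b
  have hIocInt : ∫ s in a..b, (wh s ^ 2 - 1) = ∫ s in Ioc a b, (wh s ^ 2 - 1) :=
    intervalIntegral.integral_of_le hab
  have hconst_int : IntegrableOn (fun _ : ℝ => (1:ℝ)) (Ioc a b) :=
    integrableOn_const measure_Ioc_lt_top.ne
  have hwsq_int_ab : IntegrableOn (fun s : ℝ => wh s ^ 2 - 1) (Ioc a b) :=
    hwsqcont_ab.integrableOn_Icc.mono_set Ioc_subset_Icc_self
  have hvol : (volume (Ioc a b)).toReal = b - a := by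
    rw [Real.volume_Ioc, ENNReal.toReal_ofReal (by linarith)]
  -- final contradiction
  rcases le_abs.mp hcon with hi | lo
  · -- wh r ≥ 1 + ε
    have hptw : ∀ s ∈ Ioc a b, ε ≤ wh s ^ 2 - 1 := by
      intro s hs
      have hs' : s ∈ Icc a b := Ioc_subset_Icc_self hs
      have h1 := hosc s hs'
      rw [abs_le] at h1
      have hws : 1 + 3/4 * ε ≤ wh s := by linarith [h1.1]
      nlinarith [hε0]
    have hlb : ε * (b - a) ≤ ∫ s in Ioc a b, (wh s ^ 2 - 1) := by
      have hc : ∫ s in Ioc a b, (ε:ℝ) = ε * (b - a) := by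
        rw [setIntegral_const, measureReal_def, hvol, smul_eq_mul]; ring
      rw [← hc]
      have hce : IntegrableOn (fun _ : ℝ => (ε:ℝ)) (Ioc a b) :=
        integrableOn_const measure_Ioc_lt_top.ne
      exact setIntegral_mono_on hce hwsq_int_ab measurableSet_Ioc hptw
    rw [hIocInt, abs_le] at hmain
    nlinarith [hε0, hba, hmain.2]
  · -- wh r ≤ 1 - ε
    have hptw : ∀ s ∈ Ioc a b, wh s ^ 2 - 1 ≤ -(15/16) * ε := by
      intro s hs
      have hs' : s ∈ Icc a b := Ioc_subset_Icc_self hs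
      have h1 := hosc s hs'
      rw [abs_le] at h1
      have hws : wh s ≤ 1 - 3/4 * ε := by linarith [h1.2]
      have hws0 : 0 ≤ wh s := hpos s (hIoi0 (hIocab hs))
      nlinarith [hε0, hε1]
    have hub2 : ∫ s in Ioc a b, (wh s ^ 2 - 1) ≤ -(15/16) * ε * (b - a) := by
      have hc : ∫ s in Ioc a b, (-(15/16) * ε : ℝ) = -(15/16) * ε * (b - a) := by
        rw [setIntegral_const, measureReal_def, hvol, smul_eq_mul]; ring
      rw [← hc]
      have hce : IntegrableOn (fun _ : ℝ => (-(15/16) * ε : ℝ)) (Ioc a b) :=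
        integrableOn_const measure_Ioc_lt_top.ne
      exact setIntegral_mono_on hwsq_int_ab hce measurableSet_Ioc hptw
    rw [hIocInt, abs_le] at hmain
    nlinarith [hε0, hba, hmain.1]
end

section
/- Let (û, ŵ) ∈ W^{1,2}_loc((0, 1], ℝ²) satisfy X₁ := ∫₀¹ r [(ŵ² − 1 + û')² + û²/r² + ŵ'² + ŵ²/r²] dr < ∞. Then |û(1)|² ≤ 4 (1 + X₁^{3/2}). -/
/-!
The integrand `e` of `X = X₁` dominates `û² + ŵ²`, `|(ŵ²)'|` and `|2û(ŵ² - 1 + û')|` on `(0, 1]`.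
At a point `r₀` where `e(r₀) ≤ X` both `û(r₀)²` and `ŵ(r₀)²` are at most `X`, and since `ŵ²`
varies by at most `∫ e = X`, we get `ŵ² ≤ 2X` throughout. Then
`(û²)' = 2û(ŵ² - 1 + û') - 2ûŵ² + 2û` is bounded by `(2 + √(2X)) e + 1`, so
`û(1)² ≤ 3X + √2 X^{3/2} + 1 ≤ 4 (1 + X^{3/2})`.
-/

open MeasureTheory Set Filter

theorem abs_sub_le_setIntegral_of_hasDerivAt {F F' g : ℝ → ℝ} {s : Set ℝ} (hs : s.OrdConnected)
    (hF : ∀ x ∈ s, HasDerivAt F (F' x) x) (hg : IntegrableOn g s)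
    (hF'g : ∀ x ∈ s, |F' x| ≤ g x) {a b : ℝ} (ha : a ∈ s) (hb : b ∈ s) :
    |F b - F a| ≤ ∫ x in s, g x := by
  have hab : uIcc a b ⊆ s := hs.uIcc_subset ha hb
  have hab' : uIoc a b ⊆ s := uIoc_subset_uIcc.trans hab
  have hF'meas : AEStronglyMeasurable F' (volume.restrict s) :=
    (measurable_deriv F).aestronglyMeasurable.congr <|
      (ae_restrict_iff' hs.measurableSet).2 (ae_of_all _ fun x hx => (hF x hx).deriv)
  have hF'int : IntegrableOn F' s :=
    hg.mono' hF'meas ((ae_restrict_iff' hs.measurableSet).2 (ae_of_all _ hF'g))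
  rw [← intervalIntegral.integral_eq_sub_of_hasDerivAt (fun x hx => hF x (hab hx))
      (intervalIntegrable_iff.2 (hF'int.mono_set hab')),
    intervalIntegral.abs_integral_eq_abs_integral_uIoc]
  calc ‖∫ x in uIoc a b, F' x‖ ≤ ∫ x in uIoc a b, g x :=
        norm_integral_le_of_norm_le (hg.mono_set hab')
          ((ae_restrict_iff' measurableSet_uIoc).2 (ae_of_all _ fun x hx => hF'g x (hab' hx)))
    _ ≤ ∫ x in s, g x :=
        setIntegral_mono_set hg
          ((ae_restrict_iff' hs.measurableSet).2
            (ae_of_all _ fun x hx => (abs_nonneg _).trans (hF'g x hx)))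
          hab'.eventuallyLE

theorem abs_two_mul_mul_le_of_sq_add_sq_le {r x y E : ℝ} (hr : 0 < r)
    (h : x ^ 2 + (r * y) ^ 2 ≤ E * r) : |2 * x * y| ≤ E := by
  refine le_of_mul_le_mul_right ?_ hr
  calc |2 * x * y| * r = 2 * |x| * |r * y| := by
        rw [abs_mul, abs_mul, abs_mul, abs_two, abs_of_pos hr]; ring
    _ ≤ |x| ^ 2 + |r * y| ^ 2 := two_mul_le_add_sq _ _
    _ ≤ E * r := by rwa [sq_abs, sq_abs]

/-- The integrand of `X₁`, with `u, w, p, q` standing for `û(r), ŵ(r), û'(r), ŵ'(r)`. -/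
noncomputable def energyDensity (r u w p q : ℝ) : ℝ :=
  r * ((w ^ 2 - 1 + p) ^ 2 + (u / r) ^ 2 + q ^ 2 + w ^ 2 / r ^ 2)

section energyDensity

variable {r : ℝ} (u w p q : ℝ)

theorem energyDensity_mul_self (hr : r ≠ 0) :
    energyDensity r u w p q * r = (r * (w ^ 2 - 1 + p)) ^ 2 + u ^ 2 + (r * q) ^ 2 + w ^ 2 := by
  unfold energyDensity
  field_simp

theorem sq_add_sq_le_energyDensity (hr₀ : 0 < r) (hr₁ : r ≤ 1) :
    u ^ 2 + w ^ 2 ≤ energyDensity r u w p q := by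
  have hle : u ^ 2 + w ^ 2 ≤ energyDensity r u w p q * r := by
    rw [energyDensity_mul_self u w p q hr₀.ne']
    nlinarith [sq_nonneg (r * (w ^ 2 - 1 + p)), sq_nonneg (r * q)]
  have hnn : 0 ≤ energyDensity r u w p q := by
    nlinarith [sq_nonneg u, sq_nonneg w]
  nlinarith

theorem abs_two_mul_mul_deriv_le_energyDensity (hr : 0 < r) :
    |2 * w * q| ≤ energyDensity r u w p q :=
  abs_two_mul_mul_le_of_sq_add_sq_le hr <| by
    rw [energyDensity_mul_self u w p q hr.ne']
    nlinarith [sq_nonneg (r * (w ^ 2 - 1 + p)), sq_nonneg u]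

theorem abs_two_mul_mul_residual_le_energyDensity (hr : 0 < r) :
    |2 * u * (w ^ 2 - 1 + p)| ≤ energyDensity r u w p q :=
  abs_two_mul_mul_le_of_sq_add_sq_le hr <| by
    rw [energyDensity_mul_self u w p q hr.ne']
    nlinarith [sq_nonneg (r * q), sq_nonneg w]

theorem abs_two_mul_mul_le_energyDensity {c : ℝ} (hr₀ : 0 < r) (hr₁ : r ≤ 1) (hw : |w| ≤ c) :
    |2 * u * p| ≤ (2 + c) * energyDensity r u w p q + 1 := by
  have hc : 0 ≤ c := (abs_nonneg w).trans hw
  have hE := sq_add_sq_le_energyDensity u w p q hr₀ hr₁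
  have hres := abs_two_mul_mul_residual_le_energyDensity u w p q hr₀
  have hcubic : |2 * u * w ^ 2| ≤ c * (u ^ 2 + w ^ 2) :=
    calc |2 * u * w ^ 2| = (2 * |u| * |w|) * |w| := by
          rw [abs_mul, abs_mul, abs_two, abs_pow]; ring
      _ ≤ (u ^ 2 + w ^ 2) * c := by
          gcongr
          simpa only [sq_abs] using two_mul_le_add_sq |u| |w|
      _ = c * (u ^ 2 + w ^ 2) := mul_comm _ _
  have hlin : |2 * u| ≤ u ^ 2 + 1 := by
    simpa only [abs_mul, abs_two, sq_abs, one_pow, mul_one] using two_mul_le_add_sq |u| 1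
  have htri : |2 * u * p| ≤ |2 * u * (w ^ 2 - 1 + p)| + |2 * u * w ^ 2| + |2 * u| := by
    rw [show 2 * u * p = 2 * u * (w ^ 2 - 1 + p) - 2 * u * w ^ 2 + 2 * u by ring]
    exact (abs_add_le _ _).trans (add_le_add_left (abs_sub _ _) _)
  nlinarith [mul_le_mul_of_nonneg_left hE hc]

end energyDensity

theorem three_mul_add_sqrt_two_mul_mul_add_one_le {X : ℝ} (hX : 0 ≤ X) :
    3 * X + √(2 * X) * X + 1 ≤ 4 * (1 + X ^ ((3 : ℝ) / 2)) := by
  obtain ⟨y, hy, rfl⟩ : ∃ y, 0 ≤ y ∧ X = y ^ 2 := ⟨√X, Real.sqrt_nonneg X, (Real.sq_sqrt hX).symm⟩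
  have hpow : (y ^ 2) ^ ((3 : ℝ) / 2) = y ^ 3 := by
    rw [← Real.rpow_natCast, ← Real.rpow_mul hy]; norm_num
  have hsqrt : √(2 * y ^ 2) = √2 * y := by
    rw [Real.sqrt_mul zero_le_two, Real.sqrt_sq hy]
  have hsqrt2 : √2 ≤ 3 / 2 := Real.sqrt_le_iff.2 ⟨by norm_num, by norm_num⟩
  rw [hpow, hsqrt]
  nlinarith [mul_le_mul_of_nonneg_right hsqrt2 (pow_nonneg hy 3), sq_nonneg (y - 1),
    mul_nonneg hy (sq_nonneg (y - 1))]

theorem exists_mem_Ioo_le_setIntegral {f : ℝ → ℝ} (hf : IntegrableOn f (Ioo 0 1)) :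
    ∃ r ∈ Ioo (0 : ℝ) 1, f r ≤ ∫ x in Ioo 0 1, f x := by
  simpa [setAverage_eq] using exists_le_setAverage (by simp) (by simp) hf

/-- if `(û, ŵ) ∈ W^{1,2}_loc((0, 1], ℝ²)` (continuous representatives with
pointwise derivatives) satisfies
`X₁ := ∫₀¹ r [(ŵ² − 1 + û')² + û²/r² + ŵ'² + ŵ²/r²] dr < ∞`, then
`|û(1)|² ≤ 4 (1 + X₁^{3/2})`. -/
theorem stmt18 (uh wh uh' wh' : ℝ → ℝ)
    (hu : ∀ r ∈ Ioc (0 : ℝ) 1, HasDerivAt uh (uh' r) r)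
    (hw : ∀ r ∈ Ioc (0 : ℝ) 1, HasDerivAt wh (wh' r) r)
    (hX : IntegrableOn
      (fun r => r * ((wh r ^ 2 - 1 + uh' r) ^ 2 + (uh r / r) ^ 2 + wh' r ^ 2 + wh r ^ 2 / r ^ 2))
      (Ioo 0 1)) :
    (uh 1) ^ 2 ≤ 4 * (1 +
      (∫ r in Ioo 0 1,
        r * ((wh r ^ 2 - 1 + uh' r) ^ 2 + (uh r / r) ^ 2 + wh' r ^ 2 + wh r ^ 2 / r ^ 2)) ^
      ((3 : ℝ) / 2)) := by
  set e : ℝ → ℝ := fun r => energyDensity r (uh r) (wh r) (uh' r) (wh' r)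
  change IntegrableOn e (Ioo 0 1) at hX
  change uh 1 ^ 2 ≤ 4 * (1 + (∫ r in Ioo 0 1, e r) ^ ((3 : ℝ) / 2))
  set X := ∫ r in Ioo 0 1, e r
  have hXIoc : ∫ r in Ioc 0 1, e r = X := setIntegral_congr_set Ioo_ae_eq_Ioc.symm
  have heIoc : IntegrableOn e (Ioc 0 1) := hX.congr_set_ae Ioo_ae_eq_Ioc.symm
  have hE r (hr : r ∈ Ioc (0 : ℝ) 1) : uh r ^ 2 + wh r ^ 2 ≤ e r :=
    sq_add_sq_le_energyDensity (uh r) (wh r) (uh' r) (wh' r) hr.1 hr.2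
  obtain ⟨r₀, hr₀, her₀⟩ := exists_mem_Ioo_le_setIntegral hX
  have hr₀' : r₀ ∈ Ioc (0 : ℝ) 1 := Ioo_subset_Ioc_self hr₀
  have hX₀ : 0 ≤ X := by nlinarith [hE r₀ hr₀']
  have hwbound r (hr : r ∈ Ioc (0 : ℝ) 1) : |wh r| ≤ √(2 * X) := by
    have hvar := abs_sub_le_setIntegral_of_hasDerivAt ordConnected_Ioc
      (fun x hx => by simpa [mul_assoc] using (hw x hx).fun_pow 2) heIoc
      (fun x hx => abs_two_mul_mul_deriv_le_energyDensity (uh x) (wh x) (uh' x) (wh' x) hx.1)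
      hr₀' hr
    refine Real.abs_le_sqrt ?_
    linarith [le_abs_self (wh r ^ 2 - wh r₀ ^ 2), hE r₀ hr₀', sq_nonneg (uh r₀)]
  have hint : IntegrableOn (fun r => (2 + √(2 * X)) * e r + 1) (Ioc 0 1) :=
    (heIoc.const_mul _).add (integrableOn_const (by simp))
  have hvar := abs_sub_le_setIntegral_of_hasDerivAt ordConnected_Ioc
    (fun x hx => by simpa [mul_assoc] using (hu x hx).fun_pow 2) hint
    (fun x hx => abs_two_mul_mul_le_energyDensity (uh x) (wh x) (uh' x) (wh' x) hx.1 hx.2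
      (hwbound x hx))
    hr₀' ⟨one_pos, le_rfl⟩
  rw [integral_add (heIoc.const_mul _) (integrableOn_const (by simp)), integral_const_mul, hXIoc,
    setIntegral_const, Real.volume_real_Ioc_of_le zero_le_one, sub_zero, one_smul] at hvar
  linarith [le_abs_self (uh 1 ^ 2 - uh r₀ ^ 2), hE r₀ hr₀', sq_nonneg (wh r₀),
    three_mul_add_sqrt_two_mul_mul_add_one_le hX₀]
end

section
/- Every twice continuously differentiable function û : (0, ∞) → ℝ satisfying the linear ODE (r(û'(r) − 1))' = û(r)/r for all r ∈ (0, ∞) is of the form û(r) = (1/2) r log r + C₁ r + C₂ r^{−1} for some constants C₁, C₂ ∈ ℝ. In particular, if moreover û(r) → 0 as r → 0, then C₂ = 0 and û(r) = (1/2) r log r + C₁ r, which is negative for all sufficiently small r > 0. -/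
/-!
Let `g = r (û' - 1)`. Using `g' = û / r`, the function `g / r + û / r = (r û)' / r - 1` has
derivative `1 / r`, so `(r û)' = r log r + a r` for a constant `a`, and integrating once more gives
`r û = (1/2) r² log r + C₁ r² + C₂`. Since `r log r → 0`, the right-hand side tends to `C₂` as
`r → 0⁺`, while `r û → 0` when `û → 0`; hence `C₂ = 0`, and `û = r ((1/2) log r + C₁)` is negative
as soon as `log r < -2 C₁`.
-/

open Set Filter Topology Real

theorem IsOpen.exists_eq_add_of_hasDerivAt {s : Set ℝ} (hs : IsOpen s) (hs' : IsPreconnected s)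
    {f g f' : ℝ → ℝ} (hf : ∀ x ∈ s, HasDerivAt f (f' x) x) (hg : ∀ x ∈ s, HasDerivAt g (f' x) x) :
    ∃ a, ∀ x ∈ s, f x = g x + a :=
  hs.exists_eq_add_of_deriv_eq hs' (fun x hx => (hf x hx).differentiableAt.differentiableWithinAt)
    (fun x hx => (hg x hx).differentiableAt.differentiableWithinAt)
    fun x hx => (hf x hx).deriv.trans (hg x hx).deriv.symm

section LinearizedODE

variable {u : ℝ → ℝ} (hu : DifferentiableOn ℝ u (Ioi 0))
  (hode : ∀ r ∈ Ioi (0 : ℝ), HasDerivAt (fun s => s * (deriv u s - 1)) (u r / r) r)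
include hu hode

theorem exists_deriv_add_div_eq_log_add :
    ∃ a, ∀ r ∈ Ioi (0 : ℝ), deriv u r + u r / r = log r + a := by
  -- `s (û' s - 1) / s + 1` rather than `û' s`: only the product is known to be differentiable
  have hderiv : ∀ r ∈ Ioi (0 : ℝ), HasDerivAt (fun s => s * (deriv u s - 1) / s + 1 + u s / s)
      r⁻¹ r := by
    intro r (hr : 0 < r)
    have hu' : HasDerivAt u (deriv u r) r :=
      (hu.differentiableAt (isOpen_Ioi.mem_nhds hr)).hasDerivAt
    refine ((((hode r hr).div (hasDerivAt_id r) hr.ne').add_const 1).add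
      (hu'.div (hasDerivAt_id r) hr.ne')).congr_deriv ?_
    simp only [id]
    field_simp
    ring
  obtain ⟨a, ha⟩ := isOpen_Ioi.exists_eq_add_of_hasDerivAt isPreconnected_Ioi hderiv
    fun r hr => hasDerivAt_log hr.ne'
  refine ⟨a, fun r (hr : 0 < r) => ?_⟩
  have := ha r hr
  rw [mul_div_cancel_left₀ _ hr.ne'] at this
  linarith

theorem exists_eq_half_mul_log_add_mul_add_div :
    ∃ C₁ C₂ : ℝ, ∀ r ∈ Ioi (0 : ℝ), u r = (1 / 2) * r * log r + C₁ * r + C₂ / r := by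
  obtain ⟨a, ha⟩ := exists_deriv_add_div_eq_log_add hu hode
  have hderiv : ∀ r ∈ Ioi (0 : ℝ), HasDerivAt (fun s => s * u s) (r * log r + a * r) r := by
    intro r (hr : 0 < r)
    have hu' : HasDerivAt u (deriv u r) r :=
      (hu.differentiableAt (isOpen_Ioi.mem_nhds hr)).hasDerivAt
    refine ((hasDerivAt_id r).mul hu').congr_deriv ?_
    have := ha r hr
    field_simp [hr.ne'] at this
    simp only [id, one_mul]
    linear_combination this
  have hprim : ∀ r ∈ Ioi (0 : ℝ),
      HasDerivAt (fun s => (1 / 2) * s ^ 2 * log s + (a / 2 - 1 / 4) * s ^ 2)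
        (r * log r + a * r) r := by
    intro r (hr : 0 < r)
    refine ((((hasDerivAt_pow 2 r).const_mul (1 / 2)).mul (hasDerivAt_log hr.ne')).add
      ((hasDerivAt_pow 2 r).const_mul _)).congr_deriv ?_
    field_simp
    ring
  obtain ⟨C₂, hC₂⟩ := isOpen_Ioi.exists_eq_add_of_hasDerivAt isPreconnected_Ioi hderiv hprim
  refine ⟨a / 2 - 1 / 4, C₂, fun r (hr : 0 < r) => ?_⟩
  rw [← mul_div_cancel_left₀ (u r) hr.ne', hC₂ r hr]
  field_simp

end LinearizedODE

theorem eq_zero_of_tendsto_of_eq_half_mul_log_add_mul_add_div {u : ℝ → ℝ} {C₁ C₂ : ℝ}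
    (hform : ∀ r ∈ Ioi (0 : ℝ), u r = (1 / 2) * r * log r + C₁ * r + C₂ / r)
    (hlim : Tendsto u (𝓝[>] 0) (𝓝 0)) : C₂ = 0 := by
  have hcont : Continuous fun r : ℝ => (1 / 2) * r * (r * log r) + C₁ * r ^ 2 + C₂ := by
    have := continuous_mul_log
    fun_prop
  have hlim' : Tendsto (fun r => r * u r) (𝓝[>] 0) (𝓝 0) := by
    simpa using (tendsto_id.mono_left nhdsWithin_le_nhds).mul hlim
  refine tendsto_nhds_unique ?_ hlim'
  refine ((hcont.tendsto 0).mono_left nhdsWithin_le_nhds).congr' ?_ |>.trans (by simp)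
  filter_upwards [self_mem_nhdsWithin] with r (hr : 0 < r)
  rw [hform r hr]
  field_simp [hr.ne']

theorem half_mul_log_add_mul_neg {C₁ r : ℝ} (hr : r ∈ Ioo 0 (exp (-2 * C₁))) :
    (1 / 2) * r * log r + C₁ * r < 0 := by
  have hlog : log r < -2 * C₁ := by
    simpa using log_lt_log hr.1 hr.2
  nlinarith [hr.1]

/-- self-penetration pathology: every `C²` function `û : (0, ∞) → ℝ`
solving `(r(û'(r) − 1))' = û(r)/r` on `(0, ∞)` has the form
`û(r) = (1/2) r log r + C₁ r + C₂ r⁻¹`; if moreover `û(r) → 0` as `r → 0⁺` then `C₂ = 0`,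
i.e. `û(r) = (1/2) r log r + C₁ r`, which is negative for all sufficiently small `r > 0`. -/
theorem stmt19 (uh : ℝ → ℝ) (h2 : ContDiffOn ℝ 2 uh (Ioi 0))
    (hode : ∀ r ∈ Ioi (0 : ℝ),
      HasDerivAt (fun s => s * (deriv uh s - 1)) (uh r / r) r) :
    (∃ C₁ C₂ : ℝ, ∀ r ∈ Ioi (0 : ℝ),
        uh r = (1 / 2) * r * Real.log r + C₁ * r + C₂ / r) ∧
    (Tendsto uh (nhdsWithin 0 (Ioi 0)) (nhds 0) →
      ∃ C₁ : ℝ, (∀ r ∈ Ioi (0 : ℝ), uh r = (1 / 2) * r * Real.log r + C₁ * r) ∧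
        ∃ δ > (0 : ℝ), ∀ r ∈ Ioo 0 δ, uh r < 0) := by
  obtain ⟨C₁, C₂, hform⟩ :=
    exists_eq_half_mul_log_add_mul_add_div (h2.differentiableOn (by norm_num)) hode
  refine ⟨⟨C₁, C₂, hform⟩, fun hlim => ?_⟩
  have hC₂ : C₂ = 0 := eq_zero_of_tendsto_of_eq_half_mul_log_add_mul_add_div hform hlim
  have hform₀ : ∀ r ∈ Ioi (0 : ℝ), uh r = (1 / 2) * r * log r + C₁ * r := by
    simpa [hC₂] using hform
  exact ⟨C₁, hform₀, exp (-2 * C₁), exp_pos _,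
    fun r hr => hform₀ r hr.1 ▸ half_mul_log_add_mul_neg hr⟩
end
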